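/- Mesa drop-off: For any ℓ > 0, Γ > 0, center p ∈ [0,1]², gradient g ∈ [−1,1]², and values A = (a_c, a_r, a_t, a_l, a_b) ∈ [0,1]⁵, every x ∈ [0,1]² with ‖x − p‖_∞ ≥ ℓ/2 + 3/Γ satisfies M(x; p, A, g) ≤ 0. -/
import Mathlib


noncomputable section

/-- The central affine piece of a mesa. -/
def Pc (p : ℝ × ℝ) (a : ℝ) (g : ℝ × ℝ) (x : ℝ × ℝ) : ℝ :=
  (x.1 - p.1) * g.1 + (x.2 - p.2) * g.2 + a

/-- The right affine piece of a mesa. -/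
def Pr (ℓ Γ : ℝ) (p : ℝ × ℝ) (a : ℝ) (g : ℝ × ℝ) (x : ℝ × ℝ) : ℝ :=
  (x.1 - p.1) * (-Γ + g.1) + (x.2 - p.2) * g.2 + a + Γ * ℓ / 2

/-- The top affine piece of a mesa. -/
def Pt (ℓ Γ : ℝ) (p : ℝ × ℝ) (a : ℝ) (g : ℝ × ℝ) (x : ℝ × ℝ) : ℝ :=
  (x.1 - p.1) * g.1 + (x.2 - p.2) * (-Γ + g.2) + a + Γ * ℓ / 2

/-- The left affine piece of a mesa. -/
def Pl (ℓ Γ : ℝ) (p : ℝ × ℝ) (a : ℝ) (g : ℝ × ℝ) (x : ℝ × ℝ) : ℝ :=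
  (x.1 - p.1) * (Γ + g.1) + (x.2 - p.2) * g.2 + a + Γ * ℓ / 2

/-- The bottom affine piece of a mesa. -/
def Pb (ℓ Γ : ℝ) (p : ℝ × ℝ) (a : ℝ) (g : ℝ × ℝ) (x : ℝ × ℝ) : ℝ :=
  (x.1 - p.1) * g.1 + (x.2 - p.2) * (Γ + g.2) + a + Γ * ℓ / 2

/-- The mesa function with center `p`, values `A` (indexed `0 = c, 1 = r, 2 = t, 3 = l, 4 = b`)
and gradient `g`: the minimum of the five affine pieces. -/
def mesa (ℓ Γ : ℝ) (p : ℝ × ℝ) (A : Fin 5 → ℝ) (g : ℝ × ℝ) (x : ℝ × ℝ) : ℝ :=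
  min (Pc p (A 0) g x)
    (min (Pr ℓ Γ p (A 1) g x) (min (Pt ℓ Γ p (A 2) g x) (min (Pl ℓ Γ p (A 3) g x) (Pb ℓ Γ p (A 4) g x))))


lemma mesa_key (ℓ Γ u v g1 g2 a : ℝ) (hℓ : 0 < ℓ) (hΓ : 0 < Γ)
    (hu : ℓ / 2 + 3 / Γ ≤ u) (hu1 : u ≤ 1)
    (hv : -1 ≤ v) (hv1 : v ≤ 1)
    (hg1 : -1 ≤ g1) (hg1' : g1 ≤ 1) (hg2 : -1 ≤ g2) (hg2' : g2 ≤ 1)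
    (ha : a ≤ 1) :
    u * (-Γ + g1) + v * g2 + a + Γ * ℓ / 2 ≤ 0 := by
  have h3 : Γ * (3 / Γ) = 3 := by field_simp
  have hΓu : Γ * (ℓ / 2 + 3 / Γ) ≤ Γ * u := mul_le_mul_of_nonneg_left hu hΓ.le
  have hupos : 0 ≤ u := le_trans (by positivity) hu
  nlinarith [mul_nonneg (sub_nonneg.mpr hv1) (sub_nonneg.mpr hg2'),
    mul_nonneg (by linarith : (0:ℝ) ≤ 1 + v) (by linarith : (0:ℝ) ≤ 1 + g2),
    mul_nonneg hupos (sub_nonneg.mpr hg1'), mul_le_mul_of_nonneg_left hu1 hupos]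

/-- Mesa drop-off: far away (in sup-norm) from the center, a mesa is nonpositive.
(The norm on `ℝ × ℝ` is the sup-norm.) -/
theorem mesa_drop (ℓ Γ : ℝ) (hℓ : 0 < ℓ) (hΓ : 0 < Γ)
    (p : ℝ × ℝ) (hp : p.1 ∈ Set.Icc (0 : ℝ) 1 ∧ p.2 ∈ Set.Icc (0 : ℝ) 1)
    (g : ℝ × ℝ) (hg : g.1 ∈ Set.Icc (-1 : ℝ) 1 ∧ g.2 ∈ Set.Icc (-1 : ℝ) 1)
    (A : Fin 5 → ℝ) (hA : ∀ i, A i ∈ Set.Icc (0 : ℝ) 1)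
    (x : ℝ × ℝ) (hx : x.1 ∈ Set.Icc (0 : ℝ) 1 ∧ x.2 ∈ Set.Icc (0 : ℝ) 1)
    (hfar : ℓ / 2 + 3 / Γ ≤ ‖x - p‖) :
    mesa ℓ Γ p A g x ≤ 0 := by

  obtain ⟨⟨hp1, hp1'⟩, hp2, hp2'⟩ := hp
  obtain ⟨⟨hx1, hx1'⟩, hx2, hx2'⟩ := hx
  obtain ⟨⟨hg1, hg1'⟩, hg2, hg2'⟩ := hg
  have hd : ℓ / 2 + 3 / Γ ≤ max |x.1 - p.1| |x.2 - p.2| := by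
    simpa [Prod.norm_def, Real.norm_eq_abs] using hfar
  have hA1 := (hA 1).2
  have hA2 := (hA 2).2
  have hA3 := (hA 3).2
  have hA4 := (hA 4).2
  unfold mesa
  rcases le_max_iff.mp hd with h | h
  · rcases le_abs.mp h with h | h
    · refine le_trans (le_trans (min_le_right _ _) (min_le_left _ _)) ?_
      unfold Pr
      exact mesa_key ℓ Γ (x.1 - p.1) (x.2 - p.2) g.1 g.2 (A 1) hℓ hΓ h
        (by linarith) (by linarith) (by linarith) hg1 hg1' hg2 hg2' hA1
    · refine le_trans (le_trans (min_le_right _ _) (le_trans (min_le_right _ _)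
        (le_trans (min_le_right _ _) (min_le_left _ _)))) ?_
      unfold Pl
      have := mesa_key ℓ Γ (-(x.1 - p.1)) (x.2 - p.2) (-g.1) g.2 (A 3) hℓ hΓ
        (by linarith) (by linarith) (by linarith) (by linarith)
        (by linarith) (by linarith) hg2 hg2' hA3
      nlinarith [this]
  · rcases le_abs.mp h with h | h
    · refine le_trans (le_trans (min_le_right _ _) (le_trans (min_le_right _ _)
        (min_le_left _ _))) ?_
      unfold Pt
      have := mesa_key ℓ Γ (x.2 - p.2) (x.1 - p.1) g.2 g.1 (A 2) hℓ hΓ h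
        (by linarith) (by linarith) (by linarith) hg2 hg2' hg1 hg1' hA2
      linarith
    · refine le_trans (le_trans (min_le_right _ _) (le_trans (min_le_right _ _)
        (le_trans (min_le_right _ _) (min_le_right _ _)))) ?_
      unfold Pb
      have := mesa_key ℓ Γ (-(x.2 - p.2)) (x.1 - p.1) (-g.2) g.1 (A 4) hℓ hΓ
        (by linarith) (by linarith) (by linarith) (by linarith)
        (by linarith) (by linarith) hg1 hg1' hA4
      nlinarith [this]
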